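/- Let F be the Minkowski gauge of a compact convex body K ⊂ ℝⁿ with 0 in its interior, with F of class C¹ on ℝⁿ∖{0}, C ≥ 1 a constant with F(−v) ≤ C·F(v) for all v, and assume the Legendre map ℓ is a homeomorphism of ℝⁿ onto (ℝⁿ)*. Let μ be a Borel probability measure supported in B̄(x₀,R) whose support is not contained in a single affine line, and assume that for every z ∈ B̄(x₀,R) the function x ↦ F(z−x) is strictly convex along every nonconstant segment in B̄(x₀, C(1+C)R) whose affine line does not pass through z (so μ has a unique median m in B̄(x₀, C(1+C)R)). Let a ↦ x(a) be a continuous path with x(0) = x₀ satisfying: x′(a) = −ℓ⁻¹(D F_{μ_{x(a)}}(x(a))) as long as μ({x(a′)}) < F*(D F_{μ_{x(a′)}}(x(a′))) for all a′ ≤ a, and x′(a) = 0 once μ({x(a′)}) ≥ F*(D F_{μ_{x(a′)}}(x(a′))) for some a′ ≤ a. Then x(a) converges as a → ∞ to the median m. -/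

import Mathlib

/-!
The median functional `Φ y = ∫ F (z - y) dμ` is continuous and, by the non-collinearity and
strict convexity hypotheses, strictly convex on the compact ball `B = B̄(x₀, C(1+C)R)`, which
contains every `y` with `Φ y ≤ Φ x₀`; so `Φ` has a unique minimiser `m` on `B`. Splitting off the
atom at `x` and using convexity of `F_{μ_x}` gives the first-order bound
`Φ y ≥ Φ x + (μ{x} - F*(ξ)) F(x - y)`, where `ξ = D F_{μ_x}(x)`.

If the flow stops, this bound makes the stopping point a global minimiser, hence `m`. Otherwise,
with `v = ℓ⁻¹ ξ`, Euler's identity gives `ξ v = F(v)²` and `F*(ξ) ≤ F(v)`, so the right derivative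
of `Φ ∘ γ` is `-F(v) (F(v) - μ{γ}) < 0`: `Φ ∘ γ` decreases and `γ` stays in `B`. By the bound,
`Φ (γ a) - Φ m ≤ (F(v) - μ{γ a}) · sup_B F(· - m)`, and the square of the gap `F(v) - μ{γ a}` is
at most the dissipation rate, which gets arbitrarily small because `Φ ∘ γ` is bounded below. Hence
`Φ (γ a) → Φ m`, and compactness of `B` with uniqueness of `m` gives `γ a → m`.
-/

open MeasureTheory Set Filter Topology

section AsymmetricNorm

variable {E : Type*} [NormedAddCommGroup E] [NormedSpace ℝ E] {F : E → ℝ}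

structure IsAsymmetricNorm (F : E → ℝ) : Prop where
  add_le : ∀ u v, F (u + v) ≤ F u + F v
  smul_of_nonneg : ∀ {t : ℝ}, 0 ≤ t → ∀ v, F (t • v) = t * F v
  le_mul_norm : ∃ β, ∀ v, F v ≤ β * ‖v‖
  mul_norm_le : ∃ α > 0, ∀ v, α * ‖v‖ ≤ F v

theorem isAsymmetricNorm_gauge {K : Set E} (hKb : Bornology.IsBounded K) (hK : Convex ℝ K)
    (hK0 : (0 : E) ∈ interior K) : IsAsymmetricNorm (gauge K) := by
  have hK0 : K ∈ 𝓝 0 := mem_interior_iff_mem_nhds.mp hK0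
  obtain ⟨r, hr, hrK⟩ := Metric.mem_nhds_iff.mp hK0
  obtain ⟨M, hM, hKM⟩ := hKb.subset_closedBall_lt 0 0
  refine ⟨gauge_add_le hK (absorbent_nhds_zero hK0), fun ht v => gauge_smul_of_nonneg ht v,
    ⟨r⁻¹, fun v => ?_⟩, ⟨M⁻¹, inv_pos.2 hM, fun v => ?_⟩⟩
  · calc gauge K v ≤ gauge (Metric.ball 0 r) v :=
          gauge_mono (absorbent_nhds_zero (Metric.ball_mem_nhds 0 hr)) hrK v
      _ = r⁻¹ * ‖v‖ := by rw [gauge_ball hr.le, div_eq_inv_mul]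
  · calc M⁻¹ * ‖v‖ = gauge (Metric.closedBall 0 M) v := by
          rw [gauge_closedBall hM.le, div_eq_inv_mul]
      _ ≤ gauge K v := gauge_mono (absorbent_nhds_zero hK0) hKM v

namespace IsAsymmetricNorm

theorem map_zero (hF : IsAsymmetricNorm F) : F 0 = 0 := by
  simpa using hF.smul_of_nonneg le_rfl (0 : E)

theorem nonneg (hF : IsAsymmetricNorm F) (v : E) : 0 ≤ F v := by
  obtain ⟨α, hα, h⟩ := hF.mul_norm_le
  exact (mul_nonneg hα.le (norm_nonneg v)).trans (h v)

theorem pos (hF : IsAsymmetricNorm F) {v : E} (hv : v ≠ 0) : 0 < F v := by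
  obtain ⟨α, hα, h⟩ := hF.mul_norm_le
  exact (mul_pos hα (norm_pos_iff.2 hv)).trans_le (h v)

theorem lipschitzWith (hF : IsAsymmetricNorm F) : ∃ K, LipschitzWith K F := by
  obtain ⟨β, hβ⟩ := hF.le_mul_norm
  refine ⟨β.toNNReal, LipschitzWith.of_le_add_mul' β fun u w => ?_⟩
  calc F u ≤ F (u - w) + F w := by simpa using hF.add_le (u - w) w
    _ ≤ F w + β * dist u w := by rw [dist_eq_norm]; linarith [hβ (u - w)]

theorem continuous (hF : IsAsymmetricNorm F) : Continuous F :=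
  hF.lipschitzWith.choose_spec.continuous

theorem convexOn (hF : IsAsymmetricNorm F) : ConvexOn ℝ univ F :=
  ⟨convex_univ, fun u _ w _ a b ha hb _ => by
    simpa only [smul_eq_mul, hF.smul_of_nonneg ha, hF.smul_of_nonneg hb]
      using hF.add_le (a • u) (b • w)⟩

theorem convexOn_const_sub (hF : IsAsymmetricNorm F) (z : E) :
    ConvexOn ℝ univ fun w => F (z - w) := by
  simpa [Function.comp_def, sub_eq_add_neg] using
    (hF.convexOn.comp_affineMap (AffineMap.const ℝ E z - AffineMap.id ℝ E))

theorem convexOn_sub_const (hF : IsAsymmetricNorm F) (x₀ : E) :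
    ConvexOn ℝ univ fun y => F (y - x₀) := by
  simpa [Function.comp_def] using
    (hF.convexOn.comp_affineMap (AffineMap.id ℝ E - AffineMap.const ℝ E x₀))

theorem isCompact_setOf_apply_sub_le [ProperSpace E] (hF : IsAsymmetricNorm F) (x₀ : E) (r : ℝ) :
    IsCompact {y | F (y - x₀) ≤ r} := by
  obtain ⟨α, hα, h⟩ := hF.mul_norm_le
  refine (isCompact_closedBall x₀ (r / α)).of_isClosed_subset
    (isClosed_le (hF.continuous.comp (continuous_sub_right x₀)) continuous_const) fun y hy => ?_
  rw [Metric.mem_closedBall, dist_eq_norm, le_div_iff₀ hα, mul_comm]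
  exact (h _).trans hy

theorem convex_setOf_apply_sub_le (hF : IsAsymmetricNorm F) (x₀ : E) (r : ℝ) :
    Convex ℝ {y | F (y - x₀) ≤ r} := by
  simpa using (hF.convexOn_sub_const x₀).convex_le r

end IsAsymmetricNorm

theorem ConvexOn.hasFDerivAt_apply_sub_le {f : E → ℝ} (hf : ConvexOn ℝ univ f) {x : E}
    {f' : E →L[ℝ] ℝ} (hd : HasFDerivAt f f' x) (y : E) : f' (y - x) ≤ f y - f x := by
  let line : ℝ →ᵃ[ℝ] E := AffineMap.lineMap x y
  have hd' : HasDerivAt (f ∘ line) (f' (y - x)) 0 :=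
    (by simpa [line] using hd : HasFDerivAt f f' (line 0)).comp_hasDerivAt 0
      AffineMap.hasDerivAt_lineMap
  simpa [slope_def_field, line] using
    (hf.comp_affineMap line).le_slope_of_hasDerivAt trivial trivial zero_lt_one hd'

theorem HasFDerivAt.apply_self_of_homogeneous
    (hhom : ∀ {t : ℝ}, 0 ≤ t → ∀ v, F (t • v) = t * F v) {v : E} {F' : E →L[ℝ] ℝ}
    (hd : HasFDerivAt F F' v) : F' v = F v := by
  have hray : HasDerivAt (fun t : ℝ => F (t • v)) (F' v) 1 :=
    (by simpa using hd : HasFDerivAt F F' ((1 : ℝ) • v)).comp_hasDerivAt 1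
      (by simpa using (hasDerivAt_id (1 : ℝ)).smul_const v)
  have hlin : (fun t : ℝ => F (t • v)) =ᶠ[𝓝 1] fun t => t * F v := by
    filter_upwards [Ioi_mem_nhds one_pos] with t ht using hhom (le_of_lt ht) v
  simpa using (hray.congr_of_eventuallyEq hlin.symm).unique
    ((hasDerivAt_id (1 : ℝ)).mul_const (F v))

noncomputable def dualGauge (F : E → ℝ) (ξ : E →L[ℝ] ℝ) : ℝ :=
  sSup (ξ '' {y | F y ≤ 1})

namespace IsAsymmetricNorm

theorem bddAbove_image_setOf_le_one (hF : IsAsymmetricNorm F) (ξ : E →L[ℝ] ℝ) :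
    BddAbove (ξ '' {y | F y ≤ 1}) := by
  obtain ⟨α, hα, h⟩ := hF.mul_norm_le
  refine ⟨‖ξ‖ * α⁻¹, forall_mem_image.2 fun y hy =>
    (le_abs_self _).trans ((ξ.le_opNorm y).trans ?_)⟩
  have hy' : ‖y‖ ≤ α⁻¹ * 1 := (le_inv_mul_iff₀ hα).2 ((h y).trans hy)
  exact mul_le_mul_of_nonneg_left (by simpa using hy') (norm_nonneg ξ)

theorem apply_le_dualGauge_mul (hF : IsAsymmetricNorm F) (ξ : E →L[ℝ] ℝ) (w : E) :
    ξ w ≤ dualGauge F ξ * F w := by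
  rcases eq_or_ne w 0 with rfl | hw
  · simp [hF.map_zero]
  have hFw : 0 < F w := hF.pos hw
  have hunit : ξ ((F w)⁻¹ • w) ≤ dualGauge F ξ :=
    le_csSup (hF.bddAbove_image_setOf_le_one ξ) (mem_image_of_mem ξ
      (by simp [hF.smul_of_nonneg (inv_nonneg.2 hFw.le), inv_mul_cancel₀ hFw.ne']))
  rw [map_smul, smul_eq_mul, inv_mul_le_iff₀ hFw] at hunit
  linarith

theorem dualGauge_le (hF : IsAsymmetricNorm F) {ξ : E →L[ℝ] ℝ} {c : ℝ}
    (h : ∀ y, F y ≤ 1 → ξ y ≤ c) : dualGauge F ξ ≤ c :=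
  csSup_le ⟨ξ 0, 0, by simp [hF.map_zero]⟩ (forall_mem_image.2 h)

theorem hasFDerivAt_apply_le (hF : IsAsymmetricNorm F) {v : E} {F' : E →L[ℝ] ℝ}
    (hd : HasFDerivAt F F' v) (y : E) : F' y ≤ F y := by
  have := hF.convexOn.hasFDerivAt_apply_sub_le hd y
  rw [map_sub, hd.apply_self_of_homogeneous hF.smul_of_nonneg] at this
  linarith

theorem tendsto_slope_apply_sub (hF : IsAsymmetricNorm F) {γ : ℝ → E} {a : ℝ} {γ' : E}
    (hγ : HasDerivAt γ γ' a) :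
    Tendsto (slope (fun t => F (γ t - γ a)) a) (𝓝[>] a) (𝓝 (F γ')) := by
  have hslope : Tendsto (slope γ a) (𝓝[>] a) (𝓝 γ') :=
    (hasDerivAt_iff_tendsto_slope.1 hγ).mono_left (nhdsGT_le_nhdsNE a)
  refine ((hF.continuous.tendsto γ').comp hslope).congr' ?_
  filter_upwards [self_mem_nhdsWithin] with t (ht : a < t)
  rw [Function.comp_apply, slope_def_module, slope_def_field, sub_self, hF.map_zero, sub_zero,
    hF.smul_of_nonneg (inv_nonneg.2 (sub_pos.2 ht).le), div_eq_inv_mul]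

theorem half_fderiv_sq_eq {v : E} (hd : DifferentiableAt ℝ F v) :
    (1 / 2 : ℝ) • fderiv ℝ (fun w => F w ^ 2) v = F v • fderiv ℝ F v := by
  rw [(hd.hasFDerivAt.pow 2).fderiv]
  module

theorem half_fderiv_sq_apply_self (hF : IsAsymmetricNorm F) {v : E}
    (hd : DifferentiableAt ℝ F v) :
    ((1 / 2 : ℝ) • fderiv ℝ (fun w => F w ^ 2) v) v = F v ^ 2 := by
  rw [half_fderiv_sq_eq hd, smul_apply,
    hd.hasFDerivAt.apply_self_of_homogeneous hF.smul_of_nonneg, smul_eq_mul, sq]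

theorem dualGauge_half_fderiv_sq_le (hF : IsAsymmetricNorm F) {v : E}
    (hd : DifferentiableAt ℝ F v) :
    dualGauge F ((1 / 2 : ℝ) • fderiv ℝ (fun w => F w ^ 2) v) ≤ F v := by
  refine hF.dualGauge_le fun y hy => ?_
  rw [half_fderiv_sq_eq hd, smul_apply, smul_eq_mul]
  calc F v * fderiv ℝ F v y ≤ F v * F y :=
        mul_le_mul_of_nonneg_left (hF.hasFDerivAt_apply_le hd.hasFDerivAt y) (hF.nonneg v)
    _ ≤ F v := mul_le_of_le_one_right (hF.nonneg v) hy

theorem legendre_inv_of_lt_dualGauge (hF : IsAsymmetricNorm F)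
    (hFd : ∀ v, v ≠ 0 → DifferentiableAt ℝ F v) {ℓ : E → E →L[ℝ] ℝ}
    (hℓ : ∀ v, v ≠ 0 → ℓ v = (1 / 2 : ℝ) • fderiv ℝ (fun w => F w ^ 2) v) (hℓ0 : ℓ 0 = 0)
    {ℓinv : (E →L[ℝ] ℝ) → E} (hright : Function.RightInverse ℓinv ℓ) {ξ : E →L[ℝ] ℝ}
    {c : ℝ} (hc : 0 ≤ c) (hξ : c < dualGauge F ξ) :
    ℓinv ξ ≠ 0 ∧ (1 / 2 : ℝ) • fderiv ℝ (fun w => F w ^ 2) (ℓinv ξ) = ξ ∧ c < F (ℓinv ξ) := by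
  have hv : ℓinv ξ ≠ 0 := by
    intro hv
    have hξ0 : ξ = 0 := by rw [← hright ξ, hv, hℓ0]
    have : dualGauge F ξ ≤ 0 := hF.dualGauge_le fun y _ => by simp [hξ0]
    linarith
  have hℓv : (1 / 2 : ℝ) • fderiv ℝ (fun w => F w ^ 2) (ℓinv ξ) = ξ := by
    rw [← hℓ _ hv, hright ξ]
  refine ⟨hv, hℓv, hξ.trans_le ?_⟩
  calc dualGauge F ξ = dualGauge F ((1 / 2 : ℝ) • fderiv ℝ (fun w => F w ^ 2) (ℓinv ξ)) := by
        rw [hℓv]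
    _ ≤ F (ℓinv ξ) := hF.dualGauge_half_fderiv_sq_le (hFd _ hv)

end IsAsymmetricNorm
end AsymmetricNorm

theorem le_sub_mul_of_tendsto_slope {A D : ℝ → ℝ} {T b ε : ℝ} (hA : ContinuousOn A (Icc T b))
    (hslope : ∀ x ∈ Ico T b, Tendsto (slope A x) (𝓝[>] x) (𝓝 (-D x)))
    (hD : ∀ x ∈ Ico T b, ε ≤ D x) {t : ℝ} (ht : t ∈ Icc T b) : A t ≤ A T - ε * (t - T) :=
  image_le_of_liminf_slope_right_le_deriv_boundary (B := fun t => A T - ε * (t - T)) hA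
    (by simp) (by fun_prop)
    (fun x _ => by
      simpa using ((((hasDerivAt_id x).sub_const T).const_mul ε).const_sub (A T)).hasDerivWithinAt)
    (fun x hx r hr =>
      ((hslope x hx).eventually (gt_mem_nhds (by linarith [hD x hx]))).frequently) ht

theorem antitoneOn_of_tendsto_slope {A D : ℝ → ℝ} (hA : Continuous A)
    (hslope : ∀ x, 0 ≤ x → Tendsto (slope A x) (𝓝[>] x) (𝓝 (-D x)))
    (hD : ∀ x, 0 ≤ x → 0 ≤ D x) : AntitoneOn A (Ici 0) := fun s hs t _ hst => by
  simpa using le_sub_mul_of_tendsto_slope hA.continuousOn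
    (fun x hx => hslope x (le_trans hs hx.1)) (fun x hx => hD x (le_trans hs hx.1)) ⟨hst, le_rfl⟩

theorem exists_lt_of_tendsto_slope {A D : ℝ → ℝ} (hA : Continuous A)
    (hslope : ∀ x, 0 ≤ x → Tendsto (slope A x) (𝓝[>] x) (𝓝 (-D x))) {c : ℝ}
    (hc : ∀ t, 0 ≤ t → c ≤ A t) {δ : ℝ} (hδ : 0 < δ) : ∃ a, 0 ≤ a ∧ D a < δ := by
  by_contra! hD
  set t := (A 0 - c) / δ + 1
  have ht : 0 ≤ t := add_nonneg (div_nonneg (sub_nonneg.2 (hc 0 le_rfl)) hδ.le) zero_le_one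
  have hdecay := le_sub_mul_of_tendsto_slope hA.continuousOn (fun x hx => hslope x hx.1)
    (fun x hx => hD x hx.1) ⟨ht, le_rfl⟩
  have hδt : δ * (t - 0) = A 0 - c + δ := by
    simp only [t, sub_zero, mul_add, mul_div_cancel₀ _ hδ.ne', mul_one]
  linarith [hc t ht]

theorem IsCompact.tendsto_of_tendsto_comp_isMinOn {X α : Type*} [TopologicalSpace X] {s : Set X}
    (hs : IsCompact s) {f : X → ℝ} (hf : Continuous f) {m : X} (hm : IsMinOn f s m)
    (huniq : ∀ y ∈ s, IsMinOn f s y → y = m) {l : Filter α} {γ : α → X}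
    (hγs : ∀ᶠ t in l, γ t ∈ s) (hlim : Tendsto (f ∘ γ) l (𝓝 (f m))) : Tendsto γ l (𝓝 m) := by
  refine hs.tendsto_nhds_of_unique_mapClusterPt hγs fun p hps hp => huniq p hps ?_
  have hfp : f p = f m :=
    eq_of_nhds_neBot (ClusterPt.mono (hp.tendsto_comp (hf.tendsto p)) hlim)
  exact fun y hy => hfp.trans_le (hm hy)

theorem MeasureTheory.Measure.sub_smul_dirac_eq_restrict_compl {α : Type*} [MeasurableSpace α]
    [MeasurableSingletonClass α] (μ : Measure α) [IsFiniteMeasure μ] (x : α) :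
    μ - μ {x} • Measure.dirac x = μ.restrict {x}ᶜ := by
  rw [← Measure.restrict_singleton]
  nth_rewrite 1 [← μ.restrict_add_restrict_compl (measurableSet_singleton x)]
  rw [add_comm, Measure.add_sub_cancel]

section MedianFunctional

variable {E : Type*} [NormedAddCommGroup E] [MeasurableSpace E] {F : E → ℝ} {μ : Measure E}

noncomputable def medianFunctional (F : E → ℝ) (μ : Measure E) (y : E) : ℝ :=
  ∫ z, F (z - y) ∂μ

theorem medianFunctional_le_of_ae_le [IsProbabilityMeasure μ] {x₀ : E} {R : ℝ}
    (hint : Integrable (fun z => F (z - x₀)) μ) (hsupp : ∀ᵐ z ∂μ, F (z - x₀) ≤ R) :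
    medianFunctional F μ x₀ ≤ R := by
  simpa [medianFunctional] using integral_mono_ae hint (integrable_const R) hsupp

theorem medianFunctional_eq_restrict_compl_add [MeasurableSingletonClass E] {y : E}
    (hint : Integrable (fun z => F (z - y)) μ) (x : E) : medianFunctional F μ y =
      medianFunctional F (μ.restrict {x}ᶜ) y + μ.real {x} * F (x - y) := by
  rw [medianFunctional, ← integral_add_compl (measurableSet_singleton x) hint, integral_singleton,
    smul_eq_mul, add_comm]
  rfl

variable [NormedSpace ℝ E]

theorem measure_setOf_strictConvexOn_ne_zero {x₀ : E} {R r : ℝ}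
    (hsupp : ∀ᵐ z ∂μ, F (z - x₀) ≤ R)
    (hnotline : ¬ ∃ a b : E, μ {z | ∃ t : ℝ, z = a + t • b}ᶜ = 0)
    (hconv : ∀ z, F (z - x₀) ≤ R → ∀ x y : E, F (x - x₀) ≤ r → F (y - x₀) ≤ r → x ≠ y →
      (∀ t : ℝ, x + t • (y - x) ≠ z) → StrictConvexOn ℝ (segment ℝ x y) fun w => F (z - w))
    {x y : E} (hx : F (x - x₀) ≤ r) (hy : F (y - x₀) ≤ r) (hxy : x ≠ y) :
    μ {z | StrictConvexOn ℝ (segment ℝ x y) fun w => F (z - w)} ≠ 0 := by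
  intro h0
  refine hnotline ⟨x, y - x, ae_iff.1 ?_⟩
  filter_upwards [hsupp, measure_eq_zero_iff_ae_notMem.1 h0] with z hz hzs
  by_contra! hline
  exact hzs (hconv z hz x y hx hy hxy fun t ht => hline t ht.symm)

namespace IsAsymmetricNorm

theorem integrable_apply_sub [OpensMeasurableSpace E] [IsFiniteMeasure μ]
    (hF : IsAsymmetricNorm F) {x₀ : E} {R : ℝ}
    (hsupp : ∀ᵐ z ∂μ, F (z - x₀) ≤ R) (y : E) : Integrable (fun z => F (z - y)) μ := by
  refine Integrable.mono' (integrable_const (R + F (x₀ - y)))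
    (hF.continuous.comp (continuous_sub_right y)).aestronglyMeasurable ?_
  filter_upwards [hsupp] with z hz
  rw [Real.norm_of_nonneg (hF.nonneg _)]
  calc F (z - y) ≤ F (z - x₀) + F (x₀ - y) := by simpa using hF.add_le (z - x₀) (x₀ - y)
    _ ≤ R + F (x₀ - y) := by gcongr

theorem apply_sub_le_of_medianFunctional_le [OpensMeasurableSpace E]
    [IsProbabilityMeasure μ] (hF : IsAsymmetricNorm F)
    {C : ℝ} (hC : 0 ≤ C) (hrev : ∀ v, F (-v) ≤ C * F v) {x₀ : E} {R : ℝ}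
    (hsupp : ∀ᵐ z ∂μ, F (z - x₀) ≤ R) {y : E} (hy : medianFunctional F μ y ≤ R) :
    F (y - x₀) ≤ C * (1 + C) * R := by
  have hback : ∀ u w : E, F (u - w) ≤ C * F (w - u) := fun u w => by
    simpa using hrev (w - u)
  have hpt : ∀ᵐ z ∂μ, F (x₀ - y) ≤ C * R + F (z - y) := by
    filter_upwards [hsupp] with z hz
    calc F (x₀ - y) ≤ F (x₀ - z) + F (z - y) := by simpa using hF.add_le (x₀ - z) (z - y)
      _ ≤ C * R + F (z - y) := by gcongr; exact (hback _ _).trans (by gcongr)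
  have hint := hF.integrable_apply_sub hsupp
  have hx₀y : F (x₀ - y) ≤ C * R + medianFunctional F μ y :=
    calc F (x₀ - y) = ∫ _z, F (x₀ - y) ∂μ := by simp
      _ ≤ ∫ z, (C * R + F (z - y)) ∂μ :=
          integral_mono_ae (integrable_const _) ((integrable_const _).add (hint y)) hpt
      _ = C * R + medianFunctional F μ y := by
          rw [integral_add (integrable_const _) (hint y)]
          simp [medianFunctional]
  calc F (y - x₀) ≤ C * F (x₀ - y) := hback _ _
    _ ≤ C * (C * R + R) := by gcongr; linarith
    _ = C * (1 + C) * R := by ring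

theorem continuous_medianFunctional [IsFiniteMeasure μ] (hF : IsAsymmetricNorm F)
    (hint : ∀ y, Integrable (fun z => F (z - y)) μ) : Continuous (medianFunctional F μ) := by
  obtain ⟨K, hK⟩ := hF.lipschitzWith
  refine (LipschitzWith.of_dist_le_mul (K := K * (μ univ).toNNReal) fun y y' => ?_).continuous
  rw [dist_eq_norm, medianFunctional, medianFunctional, ← integral_sub (hint y) (hint y')]
  refine (norm_integral_le_of_norm_le_const (C := K * dist y y')
    (Eventually.of_forall fun z => ?_)).trans_eq ?_
  · rw [Real.norm_eq_abs, ← Real.dist_eq, ← dist_sub_left z y y']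
    exact hK.dist_le_mul _ _
  · simp only [Measure.real, NNReal.coe_mul, ENNReal.coe_toNNReal_eq_toReal]
    ring

theorem convexOn_medianFunctional (hF : IsAsymmetricNorm F)
    (hint : ∀ y, Integrable (fun z => F (z - y)) μ) : ConvexOn ℝ univ (medianFunctional F μ) := by
  refine ⟨convex_univ, fun x _ y _ a b ha hb hab => ?_⟩
  calc medianFunctional F μ (a • x + b • y) ≤ ∫ z, (a * F (z - x) + b * F (z - y)) ∂μ :=
        integral_mono (hint _) (((hint x).const_mul a).add ((hint y).const_mul b))
          fun z => (hF.convexOn_const_sub z).2 trivial trivial ha hb hab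
    _ = a • medianFunctional F μ x + b • medianFunctional F μ y := by
        rw [integral_add ((hint x).const_mul a) ((hint y).const_mul b), integral_const_mul,
          integral_const_mul]
        rfl

theorem strictConvexOn_medianFunctional (hF : IsAsymmetricNorm F)
    (hint : ∀ y, Integrable (fun z => F (z - y)) μ) {s : Set E} (hs : Convex ℝ s)
    (hstrict : ∀ x ∈ s, ∀ y ∈ s, x ≠ y →
      μ {z | StrictConvexOn ℝ (segment ℝ x y) fun w => F (z - w)} ≠ 0) :
    StrictConvexOn ℝ s (medianFunctional F μ) := by
  refine ⟨hs, fun x hx y hy hxy a b ha hb hab => ?_⟩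
  have hcomb : Integrable (fun z => a * F (z - x) + b * F (z - y)) μ :=
    ((hint x).const_mul a).add ((hint y).const_mul b)
  set gap : E → ℝ := fun z => a * F (z - x) + b * F (z - y) - F (z - (a • x + b • y))
  have hgap_int : Integrable gap μ := hcomb.sub (hint _)
  have hgap_nonneg : 0 ≤ gap := fun z =>
    sub_nonneg.2 ((hF.convexOn_const_sub z).2 trivial trivial ha.le hb.le hab)
  have hsupport : {z | StrictConvexOn ℝ (segment ℝ x y) fun w => F (z - w)} ⊆
      Function.support gap := fun z hz =>
    (sub_pos.2 (hz.2 (left_mem_segment ℝ x y) (right_mem_segment ℝ x y) hxy ha hb hab)).ne'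
  have hpos : 0 < ∫ z, gap z ∂μ :=
    (integral_pos_iff_support_of_nonneg hgap_nonneg hgap_int).2
      (pos_iff_ne_zero.2 fun h => hstrict x hx y hy hxy (measure_mono_null hsupport h))
  have hgap_eq : ∫ z, gap z ∂μ = a * medianFunctional F μ x + b * medianFunctional F μ y
      - medianFunctional F μ (a • x + b • y) := by
    rw [integral_sub hcomb (hint _), integral_add ((hint x).const_mul a) ((hint y).const_mul b),
      integral_const_mul, integral_const_mul]
    rfl
  rw [hgap_eq, sub_pos] at hpos
  exact hpos

end IsAsymmetricNorm

variable [BorelSpace E] [FiniteDimensional ℝ E]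

-- `μ.restrict {x}ᶜ` is the paper's `μ_x = μ - μ({x}) δ_x`.
noncomputable def medianGrad (F : E → ℝ) (μ : Measure E) (x : E) : E →L[ℝ] ℝ :=
  fderiv ℝ (medianFunctional F (μ.restrict {x}ᶜ)) x

namespace IsAsymmetricNorm

variable [IsFiniteMeasure μ]

theorem hasFDerivAt_medianGrad (hF : IsAsymmetricNorm F) (hFd : ∀ v, v ≠ 0 → DifferentiableAt ℝ F v)
    (hint : ∀ y, Integrable (fun z => F (z - y)) μ) (x : E) :
    HasFDerivAt (medianFunctional F (μ.restrict {x}ᶜ)) (medianGrad F μ x) x := by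
  obtain ⟨K, hK⟩ := hF.lipschitzWith
  have hlip : ∀ z, LipschitzOnWith (Real.nnabs K) (fun y => F (z - y)) univ := fun z =>
    LipschitzWith.lipschitzOnWith <| LipschitzWith.of_dist_le_mul fun y y' => by
      rw [Real.coe_nnabs, NNReal.abs_eq, ← dist_sub_left z y y']
      exact hK.dist_le_mul _ _
  have hderiv : ∀ᵐ z ∂μ.restrict {x}ᶜ,
      HasFDerivAt (fun y => F (z - y)) (-fderiv ℝ F (z - x)) x := by
    filter_upwards [ae_restrict_mem (measurableSet_singleton x).compl] with z hz
    have : HasFDerivAt (fun y => F (z - y))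
        (fderiv ℝ F (z - x) ∘L (-ContinuousLinearMap.id ℝ E)) x :=
      (hFd (z - x) (sub_ne_zero.2 hz)).hasFDerivAt.comp x ((hasFDerivAt_id x).const_sub z)
    exact this.congr_fderiv (by ext; simp)
  exact (hasFDerivAt_integral_of_dominated_loc_of_lip (F := fun y z => F (z - y))
    (bound := fun _ => (K : ℝ)) univ_mem
    (Eventually.of_forall fun y =>
      (hF.continuous.comp (continuous_sub_right y)).aestronglyMeasurable)
    (hint x).restrict
    ((measurable_fderiv ℝ F).comp (measurable_sub_const x)).neg.aestronglyMeasurable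
    (Eventually.of_forall hlip) (integrable_const _) hderiv).2.differentiableAt.hasFDerivAt

theorem medianFunctional_add_le (hF : IsAsymmetricNorm F)
    (hFd : ∀ v, v ≠ 0 → DifferentiableAt ℝ F v) (hint : ∀ y, Integrable (fun z => F (z - y)) μ)
    (x y : E) :
    medianFunctional F μ x + (μ.real {x} - dualGauge F (medianGrad F μ x)) * F (x - y) ≤
      medianFunctional F μ y := by
  have hgrad := (hF.convexOn_medianFunctional fun y => (hint y).restrict).hasFDerivAt_apply_sub_le
    (hF.hasFDerivAt_medianGrad hFd hint x) y
  have hdual := hF.apply_le_dualGauge_mul (medianGrad F μ x) (x - y)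
  have hneg : medianGrad F μ x (y - x) = -medianGrad F μ x (x - y) := by
    rw [← map_neg, neg_sub]
  have hx := medianFunctional_eq_restrict_compl_add (hint x) x
  rw [sub_self, hF.map_zero, mul_zero, add_zero] at hx
  rw [medianFunctional_eq_restrict_compl_add (hint y) x]
  linarith

theorem medianFunctional_le_of_dualGauge_le (hF : IsAsymmetricNorm F)
    (hFd : ∀ v, v ≠ 0 → DifferentiableAt ℝ F v) (hint : ∀ y, Integrable (fun z => F (z - y)) μ)
    {x : E} (hx : dualGauge F (medianGrad F μ x) ≤ μ.real {x}) (y : E) :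
    medianFunctional F μ x ≤ medianFunctional F μ y := by
  have := hF.medianFunctional_add_le hFd hint x y
  nlinarith [hF.nonneg (x - y)]

theorem medianFunctional_sub_le_of_legendre (hF : IsAsymmetricNorm F)
    (hFd : ∀ v, v ≠ 0 → DifferentiableAt ℝ F v) (hint : ∀ y, Integrable (fun z => F (z - y)) μ)
    {x v : E} (hv : v ≠ 0)
    (hℓv : (1 / 2 : ℝ) • fderiv ℝ (fun w => F w ^ 2) v = medianGrad F μ x) (y : E) :
    medianFunctional F μ x - medianFunctional F μ y ≤ (F v - μ.real {x}) * F (x - y) := by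
  have hdual := hF.dualGauge_half_fderiv_sq_le (hFd v hv)
  rw [hℓv] at hdual
  have := hF.medianFunctional_add_le hFd hint x y
  nlinarith [hF.nonneg (x - y)]

theorem tendsto_slope_medianFunctional_comp (hF : IsAsymmetricNorm F)
    (hFd : ∀ v, v ≠ 0 → DifferentiableAt ℝ F v) (hint : ∀ y, Integrable (fun z => F (z - y)) μ)
    {γ : ℝ → E} {a : ℝ} {v : E} (hv : v ≠ 0) (hγ : HasDerivAt γ (-v) a)
    (hℓv : (1 / 2 : ℝ) • fderiv ℝ (fun w => F w ^ 2) v = medianGrad F μ (γ a)) :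
    Tendsto (slope (medianFunctional F μ ∘ γ) a) (𝓝[>] a)
      (𝓝 (-(F v * (F v - μ.real {γ a})))) := by
  have hrest : HasDerivAt (medianFunctional F (μ.restrict {γ a}ᶜ) ∘ γ) (-(F v ^ 2)) a := by
    have := (hF.hasFDerivAt_medianGrad hFd hint (γ a)).comp_hasDerivAt a hγ
    rwa [map_neg, ← hℓv, hF.half_fderiv_sq_apply_self (hFd v hv)] at this
  have hatom := hF.tendsto_slope_apply_sub hγ.neg
  rw [neg_neg] at hatom
  have hdec := fun t => medianFunctional_eq_restrict_compl_add (hint (γ t)) (γ a)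
  rw [show -(F v * (F v - μ.real {γ a})) = -(F v ^ 2) + μ.real {γ a} * F v by ring]
  refine (((hasDerivAt_iff_tendsto_slope.1 hrest).mono_left (nhdsGT_le_nhdsNE a)).add
    (hatom.const_mul _)).congr fun t => ?_
  simp only [slope_def_field, Function.comp_apply, hdec t, hdec a, sub_self, hF.map_zero,
    Pi.neg_apply, neg_sub_neg]
  ring

-- The gap `g = F v - μ{x}` controls both the dissipation rate `F v * g ≥ g ^ 2` and the
-- excess `Φ x - Φ m ≤ g * F (x - m)`.
theorem medianFunctional_lt_add_of_dissipation_lt (hF : IsAsymmetricNorm F)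
    (hFd : ∀ v, v ≠ 0 → DifferentiableAt ℝ F v) (hint : ∀ y, Integrable (fun z => F (z - y)) μ)
    {x v m : E} (hv : v ≠ 0)
    (hℓv : (1 / 2 : ℝ) • fderiv ℝ (fun w => F w ^ 2) v = medianGrad F μ x)
    (hgap : μ.real {x} < F v) {M ε : ℝ} (hM : 0 < M) (hε : 0 < ε) (hxm : F (x - m) ≤ M)
    (hdiss : F v * (F v - μ.real {x}) < (ε / M) ^ 2) :
    medianFunctional F μ x < medianFunctional F μ m + ε := by
  have hg : F v - μ.real {x} < ε / M := by
    refine lt_of_pow_lt_pow_left₀ 2 (div_pos hε hM).le (lt_of_le_of_lt ?_ hdiss)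
    nlinarith [measureReal_nonneg (μ := μ) (s := {x})]
  have hexcess := hF.medianFunctional_sub_le_of_legendre hFd hint hv hℓv m
  rw [lt_div_iff₀ hM] at hg
  nlinarith [hF.nonneg (x - m)]

theorem tendsto_medianFunctional_comp_of_flow (hF : IsAsymmetricNorm F)
    (hFd : ∀ v, v ≠ 0 → DifferentiableAt ℝ F v) (hint : ∀ y, Integrable (fun z => F (z - y)) μ)
    {s : Set E} (hs : IsCompact s) {m : E} (hm : IsMinOn (medianFunctional F μ) s m)
    {γ : ℝ → E} (hγ : Continuous γ)
    (hsub : ∀ y, medianFunctional F μ y ≤ medianFunctional F μ (γ 0) → y ∈ s)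
    {v : ℝ → E} (hv : ∀ a, 0 ≤ a → v a ≠ 0) (hγ' : ∀ a, 0 ≤ a → HasDerivAt γ (-v a) a)
    (hℓv : ∀ a, 0 ≤ a → (1 / 2 : ℝ) • fderiv ℝ (fun w => F w ^ 2) (v a) = medianGrad F μ (γ a))
    (hgap : ∀ a, 0 ≤ a → μ.real {γ a} < F (v a)) :
    (∀ t, 0 ≤ t → γ t ∈ s) ∧
      Tendsto (medianFunctional F μ ∘ γ) atTop (𝓝 (medianFunctional F μ m)) := by
  set Φ := medianFunctional F μ
  have hA : Continuous (Φ ∘ γ) := (hF.continuous_medianFunctional hint).comp hγ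
  have hslope (a : ℝ) (ha : 0 ≤ a) := hF.tendsto_slope_medianFunctional_comp hFd hint
    (hv a ha) (hγ' a ha) (hℓv a ha)
  have hmono : AntitoneOn (Φ ∘ γ) (Ici 0) := antitoneOn_of_tendsto_slope hA hslope
    fun a ha => mul_nonneg (hF.nonneg _) (sub_nonneg.2 (hgap a ha).le)
  have hγs (t : ℝ) (ht : 0 ≤ t) : γ t ∈ s := hsub _ (hmono self_mem_Ici ht ht)
  have hbelow (t : ℝ) (ht : 0 ≤ t) : Φ m ≤ Φ (γ t) := hm (hγs t ht)
  obtain ⟨M, hM⟩ := hs.exists_bound_of_continuousOn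
    (hF.continuous.comp (continuous_sub_right m)).continuousOn
  have hMs (x : E) (hx : x ∈ s) : F (x - m) ≤ |M| + 1 := by
    linarith [(Real.le_norm_self (F (x - m))).trans (hM x hx), le_abs_self M]
  refine ⟨hγs, tendsto_order.2 ⟨fun c hc => eventually_atTop.2 ⟨0, fun t ht =>
    hc.trans_le (hbelow t ht)⟩, fun c hc => ?_⟩⟩
  have hε : 0 < c - Φ m := sub_pos.2 hc
  obtain ⟨a, ha, hdiss⟩ := exists_lt_of_tendsto_slope hA hslope hbelow
    (δ := ((c - Φ m) / (|M| + 1)) ^ 2) (by positivity)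
  have hclose : Φ (γ a) < Φ m + (c - Φ m) :=
    hF.medianFunctional_lt_add_of_dissipation_lt hFd hint (hv a ha) (hℓv a ha) (hgap a ha)
      (by positivity) hε (hMs _ (hγs a ha)) hdiss
  exact eventually_atTop.2 ⟨a, fun t ht =>
    (hmono ha (ha.trans ht) ht).trans_lt (hclose.trans_eq (add_sub_cancel _ _))⟩

theorem tendsto_of_stopped_flow (hF : IsAsymmetricNorm F)
    (hFd : ∀ v, v ≠ 0 → DifferentiableAt ℝ F v) (hint : ∀ y, Integrable (fun z => F (z - y)) μ)
    {s : Set E} {m : E} (huniq : ∀ y ∈ s, IsMinOn (medianFunctional F μ) s y → y = m)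
    {γ : ℝ → E} (hγ : Continuous γ)
    (hsub : ∀ y, medianFunctional F μ y ≤ medianFunctional F μ (γ 0) → y ∈ s) {s₀ : ℝ}
    (hstop : ∀ a, s₀ ≤ a → HasDerivAt γ 0 a)
    (hs₀ : dualGauge F (medianGrad F μ (γ s₀)) ≤ μ.real {γ s₀}) :
    Tendsto γ atTop (𝓝 m) := by
  have hconst (t : ℝ) (ht : s₀ ≤ t) : γ t = γ s₀ :=
    constant_of_has_deriv_right_zero hγ.continuousOn
      (fun a ha => (hstop a ha.1).hasDerivWithinAt) t ⟨ht, le_rfl⟩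
  have hmin := hF.medianFunctional_le_of_dualGauge_le hFd hint hs₀
  have hm : γ s₀ = m := huniq _ (hsub _ (hmin _)) fun y _ => hmin y
  exact tendsto_const_nhds.congr' (eventually_atTop.2 ⟨s₀, fun t ht => (hm ▸ hconst t ht).symm⟩)

end IsAsymmetricNorm
end MedianFunctional

theorem median_gradient_flow_converges_general
    {n : ℕ} (K : Set (EuclideanSpace ℝ (Fin n)))
    (hK_cpt : IsCompact K) (hK_conv : Convex ℝ K)
    (hK_int : (0 : EuclideanSpace ℝ (Fin n)) ∈ interior K)
    (F : EuclideanSpace ℝ (Fin n) → ℝ) (hF : F = gauge K)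
    (hFsmooth : ContDiffOn ℝ 1 F {(0 : EuclideanSpace ℝ (Fin n))}ᶜ)
    (C : ℝ) (hC : 1 ≤ C) (hrev : ∀ v, F (-v) ≤ C * F v)
    (ℓ : EuclideanSpace ℝ (Fin n) → (EuclideanSpace ℝ (Fin n) →L[ℝ] ℝ))
    (hℓ : ∀ v, v ≠ 0 → ℓ v = (1 / 2 : ℝ) • fderiv ℝ (fun w => F w ^ 2) v)
    (hℓ0 : ℓ 0 = 0)
    (ℓinv : (EuclideanSpace ℝ (Fin n) →L[ℝ] ℝ) → EuclideanSpace ℝ (Fin n))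
    (hright : Function.RightInverse ℓinv ℓ)
    (x₀ : EuclideanSpace ℝ (Fin n)) (R : ℝ)
    (μ : Measure (EuclideanSpace ℝ (Fin n))) [IsProbabilityMeasure μ]
    (hsupp : μ {z | F (z - x₀) ≤ R}ᶜ = 0)
    (hnotline : ¬ ∃ a b : EuclideanSpace ℝ (Fin n),
      μ {z | ∃ t : ℝ, z = a + t • b}ᶜ = 0)
    (hconv : ∀ z, F (z - x₀) ≤ R →
      ∀ x y : EuclideanSpace ℝ (Fin n),
        F (x - x₀) ≤ C * (1 + C) * R → F (y - x₀) ≤ C * (1 + C) * R → x ≠ y →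
        (∀ t : ℝ, x + t • (y - x) ≠ z) →
        StrictConvexOn ℝ (segment ℝ x y) (fun w => F (z - w)))
    -- `G w y = F_{μ_w}(y)`, the median functional of `μ` with the atom at `w` removed
    (G : EuclideanSpace ℝ (Fin n) → EuclideanSpace ℝ (Fin n) → ℝ)
    (hG : G = fun w y => ∫ z, F (z - y) ∂(μ - μ {w} • Measure.dirac w))
    -- `Fs` is the dual gauge `F*`
    (Fs : (EuclideanSpace ℝ (Fin n) →L[ℝ] ℝ) → ℝ)
    (hFs : Fs = fun ξ : EuclideanSpace ℝ (Fin n) →L[ℝ] ℝ =>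
      sSup (⇑ξ '' {y | F y ≤ 1}))
    (γ : ℝ → EuclideanSpace ℝ (Fin n)) (hγcont : Continuous γ) (hγ0 : γ 0 = x₀)
    (hflow : ∀ a : ℝ, 0 ≤ a →
      (∀ a' : ℝ, 0 ≤ a' → a' ≤ a →
        (μ {γ a'}).toReal < Fs (fderiv ℝ (G (γ a')) (γ a'))) →
      HasDerivAt γ (-(ℓinv (fderiv ℝ (G (γ a)) (γ a)))) a)
    (hstop : ∀ a : ℝ, 0 ≤ a →
      (∃ a' : ℝ, 0 ≤ a' ∧ a' ≤ a ∧
        Fs (fderiv ℝ (G (γ a')) (γ a')) ≤ (μ {γ a'}).toReal) →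
      HasDerivAt γ 0 a) :
    ∃ m : EuclideanSpace ℝ (Fin n),
      (F (m - x₀) ≤ C * (1 + C) * R ∧
        ∀ y, F (y - x₀) ≤ C * (1 + C) * R →
          (∫ z, F (z - m) ∂μ) ≤ ∫ z, F (z - y) ∂μ) ∧
      (∀ m', (F (m' - x₀) ≤ C * (1 + C) * R ∧
        ∀ y, F (y - x₀) ≤ C * (1 + C) * R →
          (∫ z, F (z - m') ∂μ) ≤ ∫ z, F (z - y) ∂μ) → m' = m) ∧
      Filter.Tendsto γ Filter.atTop (nhds m) := by
  subst hF hG hFs hγ0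
  simp only [μ.sub_smul_dirac_eq_restrict_compl] at hflow hstop
  have hF := isAsymmetricNorm_gauge hK_cpt.isBounded hK_conv hK_int
  have hFd (v : EuclideanSpace ℝ (Fin n)) (hv : v ≠ 0) : DifferentiableAt ℝ (gauge K) v :=
    (hFsmooth.differentiableOn one_ne_zero).differentiableAt (isOpen_compl_singleton.mem_nhds hv)
  have hsupp' : ∀ᵐ z ∂μ, gauge K (z - γ 0) ≤ R := ae_iff.2 hsupp
  have hint := hF.integrable_apply_sub hsupp'
  set Φ := medianFunctional (gauge K) μ
  set B := {y | gauge K (y - γ 0) ≤ C * (1 + C) * R}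
  have hB : IsCompact B := hF.isCompact_setOf_apply_sub_le (γ 0) _
  have hsub (y) (hy : Φ y ≤ Φ (γ 0)) : y ∈ B := hF.apply_sub_le_of_medianFunctional_le
    (by linarith) hrev hsupp' (hy.trans (medianFunctional_le_of_ae_le (hint _) hsupp'))
  obtain ⟨m, hmB, hmin⟩ := hB.exists_isMinOn ⟨γ 0, hsub _ le_rfl⟩
    (hF.continuous_medianFunctional hint).continuousOn
  have huniq (y) (hy : y ∈ B) (hymin : IsMinOn Φ B y) : y = m :=
    (hF.strictConvexOn_medianFunctional hint (hF.convex_setOf_apply_sub_le _ _)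
      fun x hx y hy hxy => measure_setOf_strictConvexOn_ne_zero hsupp' hnotline hconv hx hy hxy
      ).eq_of_isMinOn hymin hmin hy hmB
  refine ⟨m, ⟨hmB, fun y hy => hmin hy⟩, fun m' hm' => huniq m' hm'.1 fun y hy => hm'.2 y hy, ?_⟩
  by_cases hS : ∃ s₀, 0 ≤ s₀ ∧ dualGauge (gauge K) (medianGrad (gauge K) μ (γ s₀)) ≤ μ.real {γ s₀}
  · obtain ⟨s₀, hs₀, hstop₀⟩ := hS
    exact hF.tendsto_of_stopped_flow hFd hint huniq hγcont hsub
      (fun a ha => hstop a (hs₀.trans ha) ⟨s₀, hs₀, ha, hstop₀⟩) hstop₀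
  · simp only [not_exists, not_and, not_le] at hS
    have hlegendre (a : ℝ) (ha : 0 ≤ a) :=
      hF.legendre_inv_of_lt_dualGauge hFd hℓ hℓ0 hright measureReal_nonneg (hS a ha)
    obtain ⟨hγB, hlim⟩ := hF.tendsto_medianFunctional_comp_of_flow hFd hint hB hmin hγcont hsub
      (fun a ha => (hlegendre a ha).1) (fun a ha => hflow a ha fun a' ha' _ => hS a' ha')
      (fun a ha => (hlegendre a ha).2.1) (fun a ha => (hlegendre a ha).2.2)
    exact hB.tendsto_of_tendsto_comp_isMinOn (hF.continuous_medianFunctional hint) hmin huniq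
      (eventually_atTop.2 ⟨0, hγB⟩) hlim

/-- Convergence of the (possibly stopped) gradient flow to the median
in the flat Minkowski model: under the hypotheses guaranteeing a unique median `m` of `μ`
in `B̄(x₀, C(1+C)R)`, the continuous path started at `x₀` which follows
`γ'(a) = -ℓ⁻¹(D F_{μ_{γ(a)}}(γ(a)))` as long as `μ({γ(a')}) < F*(D F_{μ_{γ(a')}}(γ(a')))`
for all `a' ≤ a`, and stops once this fails, converges to `m` as `a → ∞`. -/
theorem median_gradient_flow_converges
    {n : ℕ} (K : Set (EuclideanSpace ℝ (Fin n)))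
    (hK_cpt : IsCompact K) (hK_conv : Convex ℝ K)
    (hK_int : (0 : EuclideanSpace ℝ (Fin n)) ∈ interior K)
    (F : EuclideanSpace ℝ (Fin n) → ℝ) (hF : F = gauge K)
    (hFsmooth : ContDiffOn ℝ 1 F {(0 : EuclideanSpace ℝ (Fin n))}ᶜ)
    (C : ℝ) (hC : 1 ≤ C) (hrev : ∀ v, F (-v) ≤ C * F v)
    (ℓ : EuclideanSpace ℝ (Fin n) → (EuclideanSpace ℝ (Fin n) →L[ℝ] ℝ))
    (hℓ : ∀ v, v ≠ 0 → ℓ v = (1 / 2 : ℝ) • fderiv ℝ (fun w => F w ^ 2) v)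
    (hℓ0 : ℓ 0 = 0)
    (ℓinv : (EuclideanSpace ℝ (Fin n) →L[ℝ] ℝ) → EuclideanSpace ℝ (Fin n))
    (hleft : Function.LeftInverse ℓinv ℓ) (hright : Function.RightInverse ℓinv ℓ)
    (hℓcont : Continuous ℓ) (hℓinvcont : Continuous ℓinv)
    (x₀ : EuclideanSpace ℝ (Fin n)) (R : ℝ) (hR : 0 < R)
    (μ : Measure (EuclideanSpace ℝ (Fin n))) [IsProbabilityMeasure μ]
    (hsupp : μ {z | F (z - x₀) ≤ R}ᶜ = 0)
    (hnotline : ¬ ∃ a b : EuclideanSpace ℝ (Fin n),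
      μ {z | ∃ t : ℝ, z = a + t • b}ᶜ = 0)
    (hconv : ∀ z, F (z - x₀) ≤ R →
      ∀ x y : EuclideanSpace ℝ (Fin n),
        F (x - x₀) ≤ C * (1 + C) * R → F (y - x₀) ≤ C * (1 + C) * R → x ≠ y →
        (∀ t : ℝ, x + t • (y - x) ≠ z) →
        StrictConvexOn ℝ (segment ℝ x y) (fun w => F (z - w)))
    -- `G w y = F_{μ_w}(y)`, the median functional of `μ` with the atom at `w` removed
    (G : EuclideanSpace ℝ (Fin n) → EuclideanSpace ℝ (Fin n) → ℝ)
    (hG : G = fun w y => ∫ z, F (z - y) ∂(μ - μ {w} • Measure.dirac w))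
    -- `Fs` is the dual gauge `F*`
    (Fs : (EuclideanSpace ℝ (Fin n) →L[ℝ] ℝ) → ℝ)
    (hFs : Fs = fun ξ : EuclideanSpace ℝ (Fin n) →L[ℝ] ℝ =>
      sSup (⇑ξ '' {y | F y ≤ 1}))
    (γ : ℝ → EuclideanSpace ℝ (Fin n)) (hγcont : Continuous γ) (hγ0 : γ 0 = x₀)
    (hflow : ∀ a : ℝ, 0 ≤ a →
      (∀ a' : ℝ, 0 ≤ a' → a' ≤ a →
        (μ {γ a'}).toReal < Fs (fderiv ℝ (G (γ a')) (γ a'))) →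
      HasDerivAt γ (-(ℓinv (fderiv ℝ (G (γ a)) (γ a)))) a)
    (hstop : ∀ a : ℝ, 0 ≤ a →
      (∃ a' : ℝ, 0 ≤ a' ∧ a' ≤ a ∧
        Fs (fderiv ℝ (G (γ a')) (γ a')) ≤ (μ {γ a'}).toReal) →
      HasDerivAt γ 0 a) :
    ∃ m : EuclideanSpace ℝ (Fin n),
      (F (m - x₀) ≤ C * (1 + C) * R ∧
        ∀ y, F (y - x₀) ≤ C * (1 + C) * R →
          (∫ z, F (z - m) ∂μ) ≤ ∫ z, F (z - y) ∂μ) ∧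
      (∀ m', (F (m' - x₀) ≤ C * (1 + C) * R ∧
        ∀ y, F (y - x₀) ≤ C * (1 + C) * R →
          (∫ z, F (z - m') ∂μ) ≤ ∫ z, F (z - y) ∂μ) → m' = m) ∧
      Filter.Tendsto γ Filter.atTop (nhds m) :=
  median_gradient_flow_converges_general K hK_cpt hK_conv hK_int F hF hFsmooth C hC hrev ℓ hℓ hℓ0
    ℓinv hright x₀ R μ hsupp hnotline hconv G hG Fs hFs γ hγcont hγ0 hflow hstop
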